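/- Every transition of the intent-driven semantics whose source configuration has an ask-expression in redex position appends exactly one decision record to the ledger: if ⟨ask(a,t,p), P, L⟩ steps to ⟨e', P, L'⟩ then L' = L ++ [r] for some single record r. -/
import Mathlib


inductive Decision : Type
  | allow | deny | escalate
deriving DecidableEq

inductive Term (I : Type) : Type
  | val : Nat → Term I
  | ask : I → Term I
  | done : Nat → Term I
  | denied : Term I
  | suspended : Term I

structure Config (I C R : Type) where
  term : Term I
  pol : List (I × C → Bool)
  ledger : List R

section
variable {I C R : Type}
  (pureStep : Term I → Term I → Prop)
  (G : List (I × C → Bool) → I → C → Decision × R)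
  (realize : I → Nat) (c : C)

/-- Small-step relation. The label is `some i` exactly when the step realizes
    an effect (i.e. it is an instance of the Allow rule, invoking `realize i`). -/
inductive Step : Config I C R → Option I → Config I C R → Prop
  | pure {e e' P L} : (∀ i, e ≠ Term.ask i) → pureStep e e' →
      Step ⟨e, P, L⟩ none ⟨e', P, L⟩
  | allow {i P L} : (G P i c).1 = Decision.allow →
      Step ⟨Term.ask i, P, L⟩ (some i)
        ⟨Term.done (realize i), P, L ++ [(G P i c).2]⟩
  | deny {i P L} : (G P i c).1 = Decision.deny →
      Step ⟨Term.ask i, P, L⟩ none ⟨Term.denied, P, L ++ [(G P i c).2]⟩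
  | escalate {i P L} : (G P i c).1 = Decision.escalate →
      Step ⟨Term.ask i, P, L⟩ none ⟨Term.suspended, P, L ++ [(G P i c).2]⟩


/-- Ledger Completeness: every transition from an ask-configuration appends
    exactly one decision record to the ledger. -/
theorem ledger_completeness {a : I} {P : List (I × C → Bool)} {L : List R}
    {l : Option I} {σ' : Config I C R}
    (h : Step pureStep G realize c ⟨Term.ask a, P, L⟩ l σ') :
    ∃ r : R, σ'.ledger = L ++ [r] := by
  cases h with
  | pure hne _ => exact absurd rfl (hne a)
  | allow _ => exact ⟨_, rfl⟩
  | deny _ => exact ⟨_, rfl⟩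
  | escalate _ => exact ⟨_, rfl⟩

end
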